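/- arXiv:2310.04303 — 5 statements merged into one kernel-verified Lean document; each statement's English description precedes it below -/
import Mathlib

section
/- Let G be a finite simple graph and X a feedback vertex set of G (i.e., G - X is acyclic). If every vertex of G has degree at least two, then the number of vertices of G that do not have degree exactly two is at most |X| + sum over v in X of deg_G(v). -/
/-!
Since `G - X` is a forest, the edges inside `Xᶜ` number at most `|Xᶜ|`, so the degrees of the
vertices of `Xᶜ` sum to at most `2|Xᶜ|` plus the number of edges between `Xᶜ` and `X`, and the
latter is at most `∑_{x ∈ X} deg x`. As every degree is at least two, each vertex of `Xᶜ` whose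
degree is not two adds at least one to the lower bound `2|Xᶜ|` of that sum. The vertices of `X`
contribute at most `|X|`.
-/

open Finset SimpleGraph

namespace SimpleGraph
variable {V : Type*} {G : SimpleGraph V}

lemma IsAcyclic.card_edgeFinset_le [Fintype V] [Fintype G.edgeSet] (hG : G.IsAcyclic) :
    #G.edgeFinset ≤ Fintype.card V := by
  cases isEmpty_or_nonempty V
  · simp [edgeFinset_eq_empty.mpr (Subsingleton.elim G ⊥)]
  obtain ⟨T, hGT, hT⟩ := exists_maximal_isAcyclic_of_le_isAcyclic le_top hG
  have hTree : T.IsTree := (connected_top.maximal_le_isAcyclic_iff_isTree le_top).mp hT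
  classical
  calc #G.edgeFinset ≤ #T.edgeFinset := card_le_card (edgeFinset_mono hGT)
    _ ≤ Fintype.card V := by rw [← hTree.card_edgeFinset]; exact Nat.le_succ _

lemma IsAcyclic.sum_degrees_le [Fintype V] [DecidableRel G.Adj] (hG : G.IsAcyclic) :
    ∑ v, G.degree v ≤ 2 * Fintype.card V := by
  rw [sum_degrees_eq_twice_card_edges]
  exact Nat.mul_le_mul_left 2 hG.card_edgeFinset_le

variable [DecidableRel G.Adj]

lemma sum_degree_induce_eq (S : Finset V) :
    ∑ v : (S : Set V), (G.induce S).degree v = ∑ v ∈ S, #{w ∈ S | G.Adj v w} := by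
  rw [← S.sum_coe_sort]
  refine sum_congr rfl fun v _ => ?_
  rw [← card_neighborFinset_eq_degree]
  exact card_nbij Subtype.val (fun w hw => by simp_all) Subtype.val_injective.injOn
    fun w hw => by simp_all

variable [Fintype V]

lemma degree_eq_card_filter_adj_add_card_filter_adj [DecidableEq V] (v : V) (S : Finset V) :
    G.degree v = #{w ∈ S | G.Adj v w} + #{w ∈ Sᶜ | G.Adj v w} := by
  rw [← card_neighborFinset_eq_degree, ← card_filter_add_card_filter_not (· ∈ S)]
  congr 2 <;> ext <;> simp [and_comm]

lemma sum_card_filter_adj_le_sum_degree (S T : Finset V) :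
    ∑ v ∈ S, #{w ∈ T | G.Adj v w} ≤ ∑ w ∈ T, G.degree w := by
  rw [show ∑ v ∈ S, #{w ∈ T | G.Adj v w} = ∑ v ∈ S, #(T.bipartiteAbove G.Adj v) from rfl,
    sum_card_bipartiteAbove_eq_sum_card_bipartiteBelow]
  refine sum_le_sum fun w _ => ?_
  rw [← card_neighborFinset_eq_degree]
  exact card_le_card fun v hv => by simpa using ((mem_bipartiteBelow _).mp hv).2.symm

lemma sum_degree_le_of_isAcyclic_induce [DecidableEq V] {S : Finset V}
    (hS : (G.induce S).IsAcyclic) :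
    ∑ v ∈ S, G.degree v ≤ 2 * #S + ∑ w ∈ Sᶜ, G.degree w := by
  have hforest : ∑ v ∈ S, #{w ∈ S | G.Adj v w} ≤ 2 * #S := by
    rw [← sum_degree_induce_eq, ← Fintype.card_coe S]
    exact hS.sum_degrees_le
  calc ∑ v ∈ S, G.degree v
      = ∑ v ∈ S, #{w ∈ S | G.Adj v w} + ∑ v ∈ S, #{w ∈ Sᶜ | G.Adj v w} := by
        rw [← sum_add_distrib]
        exact sum_congr rfl fun v _ => degree_eq_card_filter_adj_add_card_filter_adj v S
    _ ≤ 2 * #S + ∑ w ∈ Sᶜ, G.degree w :=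
        add_le_add hforest (sum_card_filter_adj_le_sum_degree S Sᶜ)

lemma card_filter_degree_ne_two_add_le_sum_degree (S : Finset V)
    (hdeg : ∀ v ∈ S, 2 ≤ G.degree v) :
    #{v ∈ S | G.degree v ≠ 2} + 2 * #S ≤ ∑ v ∈ S, G.degree v := by
  rw [card_filter, mul_comm, ← smul_eq_mul, ← sum_const, ← sum_add_distrib]
  refine sum_le_sum fun v hv => ?_
  have := hdeg v hv
  split_ifs <;> omega

end SimpleGraph

/-- If `X` is a feedback vertex set of a graph `G` (removing `X` leaves an acyclic graph)
and every vertex of `G` has degree at least two, then the number of vertices whose degree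
is not exactly two is at most `|X| + ∑_{v ∈ X} deg v`. -/
theorem stmt1 {V : Type*} [Fintype V] [DecidableEq V] (G : SimpleGraph V)
    [DecidableRel G.Adj] (X : Finset V)
    (hX : (G.induce ((↑X : Set V)ᶜ)).IsAcyclic)
    (hdeg : ∀ v : V, 2 ≤ G.degree v) :
    (Finset.univ.filter fun v => G.degree v ≠ 2).card ≤ X.card + ∑ v ∈ X, G.degree v := by
  have hforest : (G.induce ↑Xᶜ).IsAcyclic := by rwa [coe_compl]
  have houtside := card_filter_degree_ne_two_add_le_sum_degree Xᶜ fun v _ => hdeg v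
  have hsum := sum_degree_le_of_isAcyclic_induce hforest
  rw [compl_compl] at hsum
  have hsplit : ({v | G.degree v ≠ 2} : Finset V) ⊆ X ∪ {v ∈ Xᶜ | G.degree v ≠ 2} :=
    fun v _ => by by_cases hv : v ∈ X <;> simp_all
  calc #{v | G.degree v ≠ 2} ≤ #X + #{v ∈ Xᶜ | G.degree v ≠ 2} :=
        (card_le_card hsplit).trans (card_union_le _ _)
    _ ≤ #X + ∑ v ∈ X, G.degree v := by omega
end

section
/- Let G be a graph, C a wide diamond with distinct endpoints v, u, and |C| ≥ 3. Then every minimum dominating set X of G satisfies X ∩ {v,u} ≠ ∅. -/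
/-- `D` is a dominating set of `G`: every vertex is in `D` or adjacent to a vertex of `D`. -/
def IsDomSet {V : Type*} (G : SimpleGraph V) (D : Finset V) : Prop :=
  ∀ w : V, w ∈ D ∨ ∃ d ∈ D, G.Adj d w

/-- `D` is a minimum dominating set of `G`. -/
def IsMinDomSet {V : Type*} (G : SimpleGraph V) (D : Finset V) : Prop :=
  IsDomSet G D ∧ ∀ D' : Finset V, IsDomSet G D' → D.card ≤ D'.card

/-!
If neither endpoint lies in a minimum dominating set `X`, no vertex of the diamond is dominated
from outside, so the whole diamond lies in `X`. Trading it for the two endpoints gives a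
dominating set smaller by at least `|C| - 2 ≥ 1`, contradicting minimality.
-/

namespace IsDomSet

variable {V : Type*} {G : SimpleGraph V} {D : Finset V}

theorem mem_of_neighborSet_disjoint (hD : IsDomSet G D) {c : V}
    (hc : ∀ w ∈ G.neighborSet c, w ∉ D) : c ∈ D :=
  (hD c).resolve_right fun ⟨d, hd, hdc⟩ => hc d hdc.symm hd

theorem sdiff_union [DecidableEq V] (hD : IsDomSet G D) {C S : Finset V}
    (hCS : ∀ c ∈ C, G.neighborSet c ⊆ S) (hSC : ∀ c ∈ C, ∃ s ∈ S, G.Adj s c) :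
    IsDomSet G (D \ C ∪ S) := by
  intro w
  by_cases hwC : w ∈ C
  · obtain ⟨s, hs, hsw⟩ := hSC w hwC
    exact .inr ⟨s, Finset.mem_union_right _ hs, hsw⟩
  rcases hD w with hwD | ⟨d, hdD, hdw⟩
  · exact .inl (Finset.mem_union_left _ (Finset.mem_sdiff.2 ⟨hwD, hwC⟩))
  by_cases hdC : d ∈ C
  · exact .inl (Finset.mem_union_right _ (hCS d hdC hdw))
  · exact .inr ⟨d, Finset.mem_union_left _ (Finset.mem_sdiff.2 ⟨hdD, hdC⟩), hdw⟩

end IsDomSet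

theorem IsMinDomSet.card_le_of_sdiff_union {V : Type*} [DecidableEq V] {G : SimpleGraph V}
    {X C S : Finset V} (hX : IsMinDomSet G X) (hCX : C ⊆ X) (hdom : IsDomSet G (X \ C ∪ S)) :
    C.card ≤ S.card := by
  have hmin := hX.2 _ hdom
  have hunion := Finset.card_union_le (X \ C) S
  have hsdiff := Finset.card_sdiff_of_subset hCX
  have hCle := Finset.card_le_card hCX
  omega

theorem stmt5_general {V : Type*} [DecidableEq V] (G : SimpleGraph V)
    (C : Finset V) (v u : V)
    (hC : ∀ c ∈ C, G.neighborSet c = {v, u}) (hcard : 3 ≤ C.card)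
    (X : Finset V) (hX : IsMinDomSet G X) :
    v ∈ X ∨ u ∈ X := by
  have hadj : ∀ c ∈ C, ∀ w, G.Adj c w ↔ w = v ∨ w = u := fun c hc w => by
    rw [← G.mem_neighborSet, hC c hc]; rfl
  by_contra! ⟨hvX, huX⟩
  have hCX : C ⊆ X := fun c hc => hX.1.mem_of_neighborSet_disjoint fun w hw => by
    rcases (hadj c hc w).1 hw with rfl | rfl <;> assumption
  have hdom : IsDomSet G (X \ C ∪ {v, u}) :=
    hX.1.sdiff_union (fun c hc => by simp [hC c hc])
      fun c hc => ⟨v, by simp, ((hadj c hc v).2 (.inl rfl)).symm⟩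
  have hle := hX.card_le_of_sdiff_union hCX hdom
  have hpair := Finset.card_le_two (a := v) (b := u)
  omega

/-- If `C` is a wide diamond with distinct endpoints `v, u` and `|C| ≥ 3`, then every
minimum dominating set contains `v` or `u`. -/
theorem stmt5 {V : Type*} [Fintype V] [DecidableEq V] (G : SimpleGraph V)
    (C : Finset V) (v u : V) (hvu : v ≠ u) (hv : v ∉ C) (hu : u ∉ C)
    (hC : ∀ c ∈ C, G.neighborSet c = {v, u}) (hcard : 3 ≤ C.card)
    (X : Finset V) (hX : IsMinDomSet G X) :
    v ∈ X ∨ u ∈ X :=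
  stmt5_general G C v u hC hcard X hX
end

section
/- Let G be a graph, C a wide diamond with distinct endpoints v, u, and |C| ≥ 3. If X is a minimum dominating set of G containing both v and u, then X ∩ C = ∅. -/
section

variable {V : Type*} {G : SimpleGraph V}

theorem IsDomSet.erase [DecidableEq V] {D : Finset V} {c : V} (hD : IsDomSet G D)
    (hN : ∀ w, G.Adj c w → w ∈ D) (hc : ∃ w, G.Adj c w) : IsDomSet G (D.erase c) := by
  intro w
  rcases hD w with hw | ⟨d, hdD, hdw⟩
  · by_cases hwc : w = c
    · obtain ⟨x, hcx⟩ := hc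
      exact Or.inr ⟨x, Finset.mem_erase.2 ⟨G.ne_of_adj hcx.symm, hN x hcx⟩, hwc ▸ hcx.symm⟩
    · exact Or.inl (Finset.mem_erase.2 ⟨hwc, hw⟩)
  · by_cases hdc : d = c
    · subst hdc
      exact Or.inl (Finset.mem_erase.2 ⟨(G.ne_of_adj hdw).symm, hN w hdw⟩)
    · exact Or.inr ⟨d, Finset.mem_erase.2 ⟨hdc, hdD⟩, hdw⟩

theorem IsMinDomSet.notMem_of_adj_subset [DecidableEq V] {X : Finset V} {c : V}
    (hX : IsMinDomSet G X) (hN : ∀ w, G.Adj c w → w ∈ X) (hc : ∃ w, G.Adj c w) : c ∉ X := by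
  intro hcX
  have hle := hX.2 _ (hX.1.erase hN hc)
  have hlt := Finset.card_erase_lt_of_mem hcX
  omega

end

theorem stmt6_general {V : Type*} [DecidableEq V] (G : SimpleGraph V)
    (C : Finset V) (v u : V)
    (hC : ∀ c ∈ C, G.neighborSet c = {v, u})
    (X : Finset V) (hX : IsMinDomSet G X) (hvX : v ∈ X) (huX : u ∈ X) :
    X ∩ C = ∅ := by
  refine Finset.eq_empty_of_forall_notMem fun c hc => ?_
  obtain ⟨hcX, hcC⟩ := Finset.mem_inter.1 hc
  have hN : ∀ w, G.Adj c w ↔ w = v ∨ w = u := fun w => by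
    rw [← G.mem_neighborSet, hC c hcC, Set.mem_insert_iff, Set.mem_singleton_iff]
  have hNX : ∀ w, G.Adj c w → w ∈ X := fun w hw => by
    rcases (hN w).1 hw with rfl | rfl
    · exact hvX
    · exact huX
  exact hX.notMem_of_adj_subset hNX ⟨v, (hN v).2 (Or.inl rfl)⟩ hcX

/-- If `C` is a wide diamond with distinct endpoints `v, u` and `|C| ≥ 3`, then a minimum
dominating set containing both `v` and `u` contains no vertex of `C`. -/
theorem stmt6 {V : Type*} [Fintype V] [DecidableEq V] (G : SimpleGraph V)
    (C : Finset V) (v u : V) (hvu : v ≠ u) (hv : v ∉ C) (hu : u ∉ C)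
    (hC : ∀ c ∈ C, G.neighborSet c = {v, u}) (hcard : 3 ≤ C.card)
    (X : Finset V) (hX : IsMinDomSet G X) (hvX : v ∈ X) (huX : u ∈ X) :
    X ∩ C = ∅ :=
  stmt6_general G C v u hC X hX hvX huX
end

section
/- Let G be a graph, C a wide diamond with distinct endpoints v, u, and |C| ≥ 3. Then every minimum dominating set X of G satisfies |X ∩ C| ≤ 1. -/
/-! If a minimum dominating set `X` contains neither endpoint, each vertex of `C` can only be
dominated by itself, so `C ⊆ X`; trading `C` for `{v, u}` then gives a smaller dominating set
because `|C| ≥ 3`. Hence `X` contains an endpoint, and two vertices of `C` in `X` would be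
twins, one of them redundant: the endpoint in `X` dominates it and the other twin dominates
its neighbours `v, u`. -/

section

variable {V : Type*} {G : SimpleGraph V}

def Dominates (G : SimpleGraph V) (D : Finset V) (w : V) : Prop :=
  w ∈ D ∨ ∃ d ∈ D, G.Adj d w

theorem IsDomSet.of_dominates_closedNbhd {D D' : Finset V} (hD : IsDomSet G D)
    (h : ∀ x ∈ D, x ∉ D' → ∀ w, w = x ∨ G.Adj x w → Dominates G D' w) :
    IsDomSet G D' := by
  intro w
  rcases hD w with hw | ⟨d, hd, hdw⟩
  · by_cases hw' : w ∈ D'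
    · exact Or.inl hw'
    · exact h w hw hw' w (Or.inl rfl)
  · by_cases hd' : d ∈ D'
    · exact Or.inr ⟨d, hd', hdw⟩
    · exact h d hd hd' w (Or.inr hdw)

theorem IsDomSet.mem_of_forall_adj_not_mem {D : Finset V} (hD : IsDomSet G D) {x : V}
    (h : ∀ w, G.Adj x w → w ∉ D) : x ∈ D :=
  (hD x).resolve_right fun ⟨d, hd, hdx⟩ => h d hdx.symm hd

def IsWideDiamond (G : SimpleGraph V) (C : Finset V) (v u : V) : Prop :=
  ∀ c ∈ C, G.neighborSet c = {v, u}

namespace IsWideDiamond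

variable {C X : Finset V} {v u c w : V}

theorem adj_iff (hC : IsWideDiamond G C v u) (hc : c ∈ C) : G.Adj c w ↔ w = v ∨ w = u := by
  rw [← SimpleGraph.mem_neighborSet, hC c hc, Set.mem_insert_iff, Set.mem_singleton_iff]

theorem adj_left (hC : IsWideDiamond G C v u) (hc : c ∈ C) : G.Adj c v :=
  (hC.adj_iff hc).2 (Or.inl rfl)

theorem adj_right (hC : IsWideDiamond G C v u) (hc : c ∈ C) : G.Adj c u :=
  (hC.adj_iff hc).2 (Or.inr rfl)

theorem subset_of_isDomSet (hC : IsWideDiamond G C v u) (hX : IsDomSet G X) (hv : v ∉ X)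
    (hu : u ∉ X) : C ⊆ X := fun c hc =>
  hX.mem_of_forall_adj_not_mem fun w hw => by
    rcases (hC.adj_iff hc).1 hw with rfl | rfl <;> assumption

variable [DecidableEq V]

theorem isDomSet_erase (hC : IsWideDiamond G C v u) (hX : IsDomSet G X)
    (hend : v ∈ X ∨ u ∈ X) {c₁ c₂ : V} (hc₁ : c₁ ∈ C) (hc₂ : c₂ ∈ C) (hc₂X : c₂ ∈ X)
    (hne : c₁ ≠ c₂) : IsDomSet G (X.erase c₁) := by
  refine hX.of_dominates_closedNbhd fun x hx hx' w hw => ?_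
  obtain rfl : x = c₁ := by simpa [hx] using hx'
  rcases hw with rfl | hxw
  · rcases hend with hv | hu
    · exact Or.inr ⟨v, Finset.mem_erase.2 ⟨(hC.adj_left hc₁).ne', hv⟩, (hC.adj_left hc₁).symm⟩
    · exact Or.inr ⟨u, Finset.mem_erase.2 ⟨(hC.adj_right hc₁).ne', hu⟩, (hC.adj_right hc₁).symm⟩
  · exact Or.inr ⟨c₂, Finset.mem_erase.2 ⟨hne.symm, hc₂X⟩,
      (hC.adj_iff hc₂).2 ((hC.adj_iff hc₁).1 hxw)⟩

theorem isDomSet_sdiff_union (hC : IsWideDiamond G C v u) (hX : IsDomSet G X) :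
    IsDomSet G (X \ C ∪ {v, u}) := by
  refine hX.of_dominates_closedNbhd fun x hx hx' w hw => ?_
  have hxC : x ∈ C := by
    by_contra hxC
    exact hx' (Finset.mem_union_left _ (Finset.mem_sdiff.2 ⟨hx, hxC⟩))
  rcases hw with rfl | hxw
  · exact Or.inr ⟨v, by simp, (hC.adj_left hxC).symm⟩
  · left
    rcases (hC.adj_iff hxC).1 hxw with rfl | rfl <;> simp

theorem left_mem_or_right_mem (hC : IsWideDiamond G C v u) (hcard : 3 ≤ C.card)
    (hX : IsMinDomSet G X) : v ∈ X ∨ u ∈ X := by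
  by_contra! hend
  have hCX := hC.subset_of_isDomSet hX.1 hend.1 hend.2
  have hmin := hX.2 _ (hC.isDomSet_sdiff_union hX.1)
  have hsdiff : (X \ C).card = X.card - C.card := Finset.card_sdiff_of_subset hCX
  have hunion := Finset.card_union_le (X \ C) {v, u}
  have hpair : ({v, u} : Finset V).card ≤ 2 := Finset.card_le_two
  have := Finset.card_le_card hCX
  omega

end IsWideDiamond

end

theorem stmt7_general {V : Type*} [DecidableEq V] (G : SimpleGraph V)
    (C : Finset V) (v u : V)
    (hC : ∀ c ∈ C, G.neighborSet c = {v, u}) (hcard : 3 ≤ C.card)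
    (X : Finset V) (hX : IsMinDomSet G X) :
    (X ∩ C).card ≤ 1 := by
  by_contra! h
  obtain ⟨c₁, hc₁, c₂, hc₂, hne⟩ := Finset.one_lt_card.1 h
  rw [Finset.mem_inter] at hc₁ hc₂
  have hend := IsWideDiamond.left_mem_or_right_mem hC hcard hX
  have hsmaller := hX.2 _ (IsWideDiamond.isDomSet_erase hC hX.1 hend hc₁.2 hc₂.2 hc₂.1 hne)
  exact (Finset.card_erase_lt_of_mem hc₁.1).not_ge hsmaller

/-- If `C` is a wide diamond with distinct endpoints `v, u` and `|C| ≥ 3`, then every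
minimum dominating set contains at most one vertex of `C`. -/
theorem stmt7 {V : Type*} [Fintype V] [DecidableEq V] (G : SimpleGraph V)
    (C : Finset V) (v u : V) (hvu : v ≠ u) (hv : v ∉ C) (hu : u ∉ C)
    (hC : ∀ c ∈ C, G.neighborSet c = {v, u}) (hcard : 3 ≤ C.card)
    (X : Finset V) (hX : IsMinDomSet G X) :
    (X ∩ C).card ≤ 1 :=
  stmt7_general G C v u hC hcard X hX
end

section
/- Let G be a graph and C a chain (a connected component of G minus its vertices of degree ≠ 2) that is an induced path whose internal structure connects two endpoints in the rest of G. Then every minimum feedback vertex set of G contains at most one vertex of C. -/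
/-! Let `x ≠ y` be two vertices of `X ∩ C`. A cycle through a degree-two vertex passes through
both of its neighbours, so, `C` being connected and made of degree-two vertices, a cycle meeting
`C` contains all of `C`. Hence every cycle through `y` also passes through `x ∈ X`, and
`X \ {y}` is a smaller feedback vertex set. -/

def IsFVS {V : Type*} [DecidableEq V] (G : SimpleGraph V) (X : Finset V) : Prop :=
  (G.induce ((↑X : Set V)ᶜ)).IsAcyclic

def IsMinFVS {V : Type*} [DecidableEq V] (G : SimpleGraph V) (X : Finset V) : Prop :=
  IsFVS G X ∧ ∀ Y : Finset V, IsFVS G Y → X.card ≤ Y.card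

namespace SimpleGraph

variable {V : Type*} {G : SimpleGraph V}

lemma Walk.IsCycle.mem_support_of_adj_of_degree_eq_two {u c d : V} {p : G.Walk u u}
    [Fintype (G.neighborSet c)] (hp : p.IsCycle) (hc : c ∈ p.support) (hdeg : G.degree c = 2)
    (hcd : G.Adj c d) : d ∈ p.support := by
  have hnbr : p.toSubgraph.neighborSet c = G.neighborSet c := by
    refine Set.eq_of_subset_of_ncard_le (p.toSubgraph.neighborSet_subset c) ?_ (Set.toFinite _)
    rw [hp.ncard_neighborSet_toSubgraph_eq_two hc, ← coe_neighborFinset, Set.ncard_coe_finset,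
      card_neighborFinset_eq_degree, hdeg]
  have hadj : p.toSubgraph.Adj c d := (Subgraph.mem_neighborSet _ _ _).mp (hnbr ▸ hcd)
  exact p.mem_verts_toSubgraph.mp hadj.snd_mem

lemma Walk.IsCycle.mem_support_of_preconnected_induce [G.LocallyFinite] {u : V}
    {p : G.Walk u u} {C : Set V} (hp : p.IsCycle) (hdeg : ∀ c ∈ C, G.degree c = 2)
    (hconn : (G.induce C).Preconnected) {c c' : V} (hc : c ∈ C) (hc' : c' ∈ C)
    (hmem : c ∈ p.support) : c' ∈ p.support := by
  obtain ⟨w⟩ := hconn ⟨c, hc⟩ ⟨c', hc'⟩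
  suffices ∀ {a b : C} (w : (G.induce C).Walk a b), (a : V) ∈ p.support → (b : V) ∈ p.support
    from this w hmem
  intro a b w
  induction w with
  | nil => exact id
  | cons hab _ ih =>
    exact fun ha ↦ ih (hp.mem_support_of_adj_of_degree_eq_two ha (hdeg _ (Subtype.prop _)) hab)

end SimpleGraph

open SimpleGraph

section FeedbackVertexSet

variable {V : Type*} [DecidableEq V] {G : SimpleGraph V}

lemma isFVS_iff_forall_isCycle {X : Finset V} :
    IsFVS G X ↔ ∀ (v : V) (p : G.Walk v v), p.IsCycle → ∃ x ∈ X, x ∈ p.support := by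
  constructor
  · intro hX v p hp
    by_contra! hmiss
    have hsupp : ∀ x ∈ p.support, x ∈ ((X : Set V)ᶜ) := fun x hx hxX ↦ hmiss x hxX hx
    have hinj : Function.Injective (Embedding.induce (G := G) (X : Set V)ᶜ).toHom :=
      Subtype.val_injective
    exact hX _ ((Walk.isCycle_map_iff_of_injective hinj).mp
      ((p.map_induce hsupp).symm ▸ hp))
  · intro hcycle v q hq
    obtain ⟨x, hxX, hx⟩ :=
      hcycle _ _ (hq.map (f := (Embedding.induce _).toHom) Subtype.val_injective)
    rw [Walk.support_map, List.mem_map] at hx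
    obtain ⟨x', -, rfl⟩ := hx
    exact x'.prop hxX

lemma IsFVS.erase {X : Finset V} {x y : V} (hX : IsFVS G X) (hxX : x ∈ X) (hxy : x ≠ y)
    (hcycle : ∀ (v : V) (p : G.Walk v v), p.IsCycle → y ∈ p.support → x ∈ p.support) :
    IsFVS G (X.erase y) := by
  rw [isFVS_iff_forall_isCycle] at hX ⊢
  intro v p hp
  obtain ⟨z, hzX, hz⟩ := hX v p hp
  by_cases hzy : z = y
  · exact ⟨x, Finset.mem_erase.mpr ⟨hxy, hxX⟩, hcycle v p hp (hzy ▸ hz)⟩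
  · exact ⟨z, Finset.mem_erase.mpr ⟨hzy, hzX⟩, hz⟩

end FeedbackVertexSet

theorem stmt8_general {V : Type*} [Fintype V] [DecidableEq V] (G : SimpleGraph V)
    [DecidableRel G.Adj] (C : Finset V)
    (hdeg : ∀ c ∈ C, G.degree c = 2)
    (hconn : (G.induce (↑C : Set V)).Connected)
    (X : Finset V) (hX : IsMinFVS G X) :
    (X ∩ C).card ≤ 1 := by
  by_contra! hgt
  obtain ⟨x, hx, y, hy, hxy⟩ := Finset.one_lt_card.mp hgt
  rw [Finset.mem_inter] at hx hy
  have hY : IsFVS G (X.erase y) := hX.1.erase hx.1 hxy fun _ _ hp hyp ↦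
    hp.mem_support_of_preconnected_induce hdeg hconn.preconnected hy.2 hx.2 hyp
  have := hX.2 _ hY
  have := Finset.card_erase_lt_of_mem hy.1
  omega

/-- If `C` is a chain of `G` (a nonempty connected set of degree-two vertices of `G`
that is closed under adjacency to degree-two vertices, i.e. a connected component of
`G - V_{≠2}(G)`), then every minimum feedback vertex set of `G` contains at most one
vertex of `C`. -/
theorem stmt8 {V : Type*} [Fintype V] [DecidableEq V] (G : SimpleGraph V)
    [DecidableRel G.Adj] (C : Finset V) (hne : C.Nonempty)
    (hdeg : ∀ c ∈ C, G.degree c = 2)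
    (hconn : (G.induce (↑C : Set V)).Connected)
    (hclosed : ∀ c ∈ C, ∀ w : V, G.Adj c w → G.degree w = 2 → w ∈ C)
    (X : Finset V) (hX : IsMinFVS G X) :
    (X ∩ C).card ≤ 1 :=
  stmt8_general G C hdeg hconn X hX
end
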